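/- Let i ≥ 2 and 1 ≤ ℓ ≤ k ≤ i−1, and let x_1,…,x_{i−1}, y_1,…,y_ℓ be independent variables over ℤ. Then Σ_{j=k}^{i} (−1)^{i−j} · e_{i−1,i−j}(y_1,…,y_ℓ, x_{ℓ+1},…,x_{i−1}) · h_{k,j−k}(x_1,…,x_k) = Σ_{j=ℓ}^{i−k+ℓ} (−1)^{i−k+ℓ−j} · e_{i−k+ℓ−1, i−k+ℓ−j}(y_1,…,y_ℓ, x_{k+1},…,x_{i−1}) · h_{ℓ,j−ℓ}(x_1,…,x_ℓ) in ℤ[x_1,…,x_{i−1},y_1,…,y_ℓ]; in particular the left-hand side does not involve the variables x_{ℓ+1},…,x_k. -/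

import Mathlib

/-!
With `E_M = ∏_{r ∈ M} (1 - r X) = ∑_p (-1)^p e_p(M) X^p` and
`H_s = ∏_{a ∈ s} (1 - w_a X)⁻¹ = ∑_q h_q(s) X^q` in `R⟦X⟧`, each side of the identity is the
coefficient of `X^(i-k)` in a product `E_M * H_s`. On the left, each of `x_{ℓ+1}, …, x_k` occurs in
both factors, and `(1 - x_m X) (1 - x_m X)⁻¹ = 1` removes it, leaving the product on the right.
-/

open Polynomial Finset

noncomputable section

/-- Elementary symmetric polynomial of degree `j` in the family `v` indexed by the finite set `s`. -/
def esymF {R : Type*} [CommRing R] {α : Type*} [DecidableEq α] (s : Finset α) (v : α → R) (j : ℕ) : R :=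
  ∑ S ∈ s.powersetCard j, ∏ m ∈ S, v m

/-- Complete homogeneous symmetric polynomial of degree `j` in the family `v` indexed by the
finite set `s`. -/
def hsymF {R : Type*} [CommRing R] {α : Type*} [DecidableEq α] (s : Finset α) (v : α → R) (j : ℕ) : R :=
  ∑ m ∈ s.sym j, ((m : Multiset α).map v).prod

section GeneratingSeries

variable {R : Type*} [CommRing R] {α : Type*} [DecidableEq α]

lemma Multiset.esymm_cons_succ (r : R) (M : Multiset R) (j : ℕ) :
    (r ::ₘ M).esymm (j + 1) = M.esymm (j + 1) + r * M.esymm j := by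
  simp only [Multiset.esymm, Multiset.powersetCard_cons, Multiset.map_add, Multiset.sum_add,
    Multiset.map_map, Function.comp_def, Multiset.prod_cons]
  rw [Multiset.sum_map_mul_left]

lemma hsymF_insert {a : α} {s : Finset α} (ha : a ∉ s) (w : α → R) (n : ℕ) :
    hsymF (insert a s) w n = ∑ pq ∈ antidiagonal n, w a ^ (pq : ℕ × ℕ).1 * hsymF s w pq.2 := by
  rw [hsymF, ← Finset.sum_coe_sort, ← (Finset.symInsertEquiv ha).symm.sum_comp, Fintype.sum_sigma,
    Finset.Nat.sum_antidiagonal_eq_sum_range_succ (fun p q => w a ^ p * hsymF s w q),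
    ← Fin.sum_univ_eq_sum_range (fun p => w a ^ p * hsymF s w (n - p))]
  refine Fintype.sum_congr _ _ fun i => ?_
  rw [hsymF, Finset.mul_sum, ← Finset.sum_coe_sort (s.sym (n - i))]
  refine Fintype.sum_congr _ _ fun m => ?_
  simp [Sym.coe_fill, Sym.coe_replicate, mul_comm]

def altEsymmSeries (M : Multiset R) : PowerSeries R :=
  (M.map fun r => 1 - PowerSeries.C r * PowerSeries.X).prod

def hsymSeries (s : Finset α) (w : α → R) : PowerSeries R :=
  ∏ a ∈ s, PowerSeries.mk (w a ^ ·)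

lemma altEsymmSeries_cons (r : R) (M : Multiset R) :
    altEsymmSeries (r ::ₘ M) = (1 - PowerSeries.C r * PowerSeries.X) * altEsymmSeries M := by
  simp [altEsymmSeries]

lemma coeff_altEsymmSeries (M : Multiset R) (p : ℕ) :
    PowerSeries.coeff p (altEsymmSeries M) = (-1) ^ p * M.esymm p := by
  induction M using Multiset.induction_on generalizing p with
  | empty => cases p <;> simp [altEsymmSeries, Multiset.esymm, Multiset.powersetCard_zero_right]
  | cons r M ih =>
    rw [altEsymmSeries_cons]
    cases p with
    | zero => simp [altEsymmSeries, map_multiset_prod, Multiset.esymm]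
    | succ p =>
      rw [sub_mul, one_mul, map_sub, mul_assoc, PowerSeries.coeff_C_mul,
        PowerSeries.coeff_succ_X_mul, ih, ih, Multiset.esymm_cons_succ]
      ring

lemma coeff_hsymSeries (s : Finset α) (w : α → R) (n : ℕ) :
    PowerSeries.coeff n (hsymSeries s w) = hsymF s w n := by
  induction s using Finset.induction_on generalizing n with
  | empty => cases n <;> simp [hsymSeries, hsymF, Sym.eq_nil_of_card_zero (∅ : Sym α 0)]
  | insert a s ha ih =>
    rw [hsymSeries, Finset.prod_insert ha, ← hsymSeries, PowerSeries.coeff_mul, hsymF_insert ha]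
    simp only [PowerSeries.coeff_mk, ih]

lemma one_sub_C_mul_X_mul_mk_pow (c : R) :
    (1 - PowerSeries.C c * PowerSeries.X) * PowerSeries.mk (c ^ ·) = 1 := by
  have := congrArg (PowerSeries.rescale c) (PowerSeries.mk_one_mul_one_sub_eq_one R)
  simpa [PowerSeries.rescale_mk, mul_comm] using this

theorem altEsymmSeries_map_add_mul_hsymSeries_union (M : Multiset R) {u t : Finset α}
    (h : Disjoint u t) (w : α → R) :
    altEsymmSeries (u.val.map w + M) * hsymSeries (u ∪ t) w
      = altEsymmSeries M * hsymSeries t w := by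
  have hu : altEsymmSeries (u.val.map w) * hsymSeries u w = 1 := by
    rw [altEsymmSeries, Multiset.map_map, Finset.prod_map_val, hsymSeries,
      ← Finset.prod_mul_distrib]
    exact Finset.prod_eq_one fun a _ => one_sub_C_mul_X_mul_mk_pow (w a)
  rw [hsymSeries, Finset.prod_union h, ← hsymSeries, ← hsymSeries, altEsymmSeries,
    Multiset.map_add, Multiset.prod_add, ← altEsymmSeries, ← altEsymmSeries]
  linear_combination (altEsymmSeries M * hsymSeries t w) * hu

end GeneratingSeries

lemma Finset.sum_Icc_eq_sum_antidiagonal {M : Type*} [AddCommMonoid M] (f : ℕ → ℕ → M)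
    {a b : ℕ} (h : a ≤ b) :
    ∑ j ∈ Icc a b, f (b - j) (j - a) = ∑ pq ∈ antidiagonal (b - a), f pq.1 pq.2 := by
  refine Finset.sum_nbij' (fun j => (b - j, j - a)) (fun pq => a + pq.2) ?_ ?_ ?_ ?_ ?_ <;>
    intros <;> simp_all [Prod.ext_iff] <;> omega

lemma sum_Icc_esymF_mul_hsymF_eq_coeff {R : Type*} [CommRing R] {α β : Type*} [DecidableEq α]
    [DecidableEq β] (s : Finset α) (v : α → R) (t : Finset β) (w : β → R) {a b : ℕ} (h : a ≤ b) :
    ∑ j ∈ Icc a b, (-1 : R) ^ (b - j) * esymF s v (b - j) * hsymF t w (j - a)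
      = PowerSeries.coeff (b - a) (altEsymmSeries (s.val.map v) * hsymSeries t w) := by
  rw [Finset.sum_Icc_eq_sum_antidiagonal (fun p q => (-1 : R) ^ p * esymF s v p * hsymF t w q) h,
    PowerSeries.coeff_mul]
  simp only [coeff_altEsymmSeries, coeff_hsymSeries, esymF, Finset.esymm_map_val]

section Intervals

variable {α : Type*} [LinearOrder α] [LocallyFiniteOrder α]

lemma Finset.val_Ioc_add_Ioc {a b c : α} (hab : a ≤ b) (hbc : b ≤ c) :
    (Ioc a b).val + (Ioc b c).val = (Ioc a c).val := by
  rw [← Finset.Ioc_union_Ioc_eq_Ioc hab hbc,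
    ← Finset.disjUnion_eq_union _ _ (Finset.Ioc_disjoint_Ioc_of_le le_rfl)]
  rfl

lemma Finset.map_val_Ioc_ite {R : Type*} (y x : α → R) {a ℓ n : α} (haℓ : a ≤ ℓ) (hℓn : ℓ ≤ n) :
    (Ioc a n).val.map (fun m => if m ≤ ℓ then y m else x m)
      = (Ioc a ℓ).val.map y + (Ioc ℓ n).val.map x := by
  rw [← Finset.val_Ioc_add_Ioc haℓ hℓn, Multiset.map_add]
  congr 1 <;> refine Multiset.map_congr rfl fun m hm => ?_ <;>
    simp only [Finset.mem_val, Finset.mem_Ioc] at hm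
  · exact if_pos hm.2
  · exact if_neg (not_le.mpr hm.1)

end Intervals

lemma Finset.map_val_Ioc_add_right {α R : Type*} [AddCommMonoid α] [PartialOrder α]
    [IsOrderedCancelAddMonoid α] [ExistsAddOfLE α] [LocallyFiniteOrder α]
    (x : α → R) (a b d : α) :
    (Ioc a b).val.map (fun m => x (m + d)) = (Ioc (a + d) (b + d)).val.map x := by
  change _ = (Multiset.Ioc (a + d) (b + d)).map x
  rw [← Multiset.map_add_right_Ioc, Multiset.map_map]
  rfl

theorem stmt15_general {R : Type*} [CommRing R] (i k ℓ : ℕ) (hℓk : ℓ ≤ k)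
    (hk : k ≤ i - 1) (x y : ℕ → R) :
    ∑ j ∈ Icc k i,
        (-1 : R) ^ (i - j)
          * esymF (Icc 1 (i - 1)) (fun m => if m ≤ ℓ then y m else x m) (i - j)
          * hsymF (Icc 1 k) x (j - k)
      = ∑ j ∈ Icc ℓ (i - k + ℓ),
          (-1 : R) ^ (i - k + ℓ - j)
            * esymF (Icc 1 (i - k + ℓ - 1))
                (fun m => if m ≤ ℓ then y m else x (m + (k - ℓ))) (i - k + ℓ - j)
            * hsymF (Icc 1 ℓ) x (j - ℓ) := by
  rw [sum_Icc_esymF_mul_hsymF_eq_coeff _ _ _ _ (by omega),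
    sum_Icc_esymF_mul_hsymF_eq_coeff _ _ _ _ (by omega)]
  simp only [show ∀ n, Icc 1 n = Ioc 0 n from Finset.Icc_add_one_left_eq_Ioc 0]
  rw [Finset.map_val_Ioc_ite _ _ (Nat.zero_le ℓ) (by omega),
    Finset.map_val_Ioc_ite _ _ (Nat.zero_le ℓ) (by omega), Finset.map_val_Ioc_add_right,
    show ℓ + (k - ℓ) = k by omega, show i - k + ℓ - 1 + (k - ℓ) = i - 1 by omega,
    show i - k + ℓ - ℓ = i - k by omega, ← Finset.val_Ioc_add_Ioc hℓk hk, Multiset.map_add,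
    add_left_comm, ← Finset.Ioc_union_Ioc_eq_Ioc (Nat.zero_le ℓ) hℓk, Finset.union_comm,
    altEsymmSeries_map_add_mul_hsymSeries_union _ (Finset.Ioc_disjoint_Ioc_of_le le_rfl).symm]

/-- For `i ≥ 2` and `1 ≤ ℓ ≤ k ≤ i−1`,
`Σ_{j=k}^{i} (−1)^{i−j} e_{i−1,i−j}(y_1,…,y_ℓ,x_{ℓ+1},…,x_{i−1}) · h_{k,j−k}(x_1,…,x_k)`
equals
`Σ_{j=ℓ}^{i−k+ℓ} (−1)^{i−k+ℓ−j} e_{i−k+ℓ−1,i−k+ℓ−j}(y_1,…,y_ℓ,x_{k+1},…,x_{i−1}) · h_{ℓ,j−ℓ}(x_1,…,x_ℓ)`.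
(Stated for arbitrary elements of an arbitrary commutative ring, equivalent to the identity in
`ℤ[x_1,…,x_{i−1},y_1,…,y_ℓ]`; `x n` denotes `x_n` and `y n` denotes `y_n`.  The argument list
`(y_1,…,y_ℓ,x_{ℓ+1},…,x_{i−1})` is encoded by the function `m ↦ if m ≤ ℓ then y m else x m` on
`{1,…,i−1}`, and `(y_1,…,y_ℓ,x_{k+1},…,x_{i−1})` by `m ↦ if m ≤ ℓ then y m else x (m+(k−ℓ))` on
`{1,…,i−k+ℓ−1}`.) -/
theorem stmt15 {R : Type*} [CommRing R] (i k ℓ : ℕ) (hi : 2 ≤ i) (hℓ : 1 ≤ ℓ) (hℓk : ℓ ≤ k)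
    (hk : k ≤ i - 1) (x y : ℕ → R) :
    ∑ j ∈ Icc k i,
        (-1 : R) ^ (i - j)
          * esymF (Icc 1 (i - 1)) (fun m => if m ≤ ℓ then y m else x m) (i - j)
          * hsymF (Icc 1 k) x (j - k)
      = ∑ j ∈ Icc ℓ (i - k + ℓ),
          (-1 : R) ^ (i - k + ℓ - j)
            * esymF (Icc 1 (i - k + ℓ - 1))
                (fun m => if m ≤ ℓ then y m else x (m + (k - ℓ))) (i - k + ℓ - j)
            * hsymF (Icc 1 ℓ) x (j - ℓ) :=
  stmt15_general i k ℓ hℓk hk x y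

end
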